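/- Let n ≥ 1 and let R : ℂⁿ × ℂⁿ × ℂⁿ × ℂⁿ → ℂ be a curvature-type form satisfying the Hermitian symmetry conj( R(X, Y, Z, W) ) = R(Y, X, W, Z) for all X, Y, Z, W ∈ ℂⁿ. Then the following are equivalent: (a) Re( R(v, v, v, v) ) > 0 for every nonzero vector v ∈ ℂⁿ; (b) for every orthonormal basis (e₁, …, eₙ) of ℂⁿ and every vector b ∈ ℝⁿ with b_i ≥ 0 for all i and b ≠ 0, one has Σ_{i,k=1}^{n} Re( R(e_i, e_i, e_k, e_k) + R(e_i, e_k, e_k, e_i) ) b_i b_k > 0. -/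

import Mathlib

/-!
Average over phases. For a frame `e`, `a = √b` and `f : Fin n → Fin 4`, put
`v_f = ∑ⱼ aⱼ I ^ fⱼ • eⱼ`. Summing `R(v_f, v_f, v_f, v_f)` over all `f` kills every coefficient
`R(eᵢ, eⱼ, e_k, e_l)` except those with `{i, k} = {j, l}` as multisets, and leaves
`4ⁿ (Q(b) - ∑ bᵢ² R(eᵢ, eᵢ, eᵢ, eᵢ))`, where `Q` is the quadratic form of the statement.
Hence `R(v, v, v, v) > 0` forces `Q(b) > ∑ bᵢ² R(eᵢ, eᵢ, eᵢ, eᵢ) ≥ 0`. Conversely, `Q` at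
`b = δ_{i₀}` in a frame with `e_{i₀} = v / ‖v‖` is `2 R(e_{i₀}, e_{i₀}, e_{i₀}, e_{i₀})`.
-/

open scoped ComplexConjugate BigOperators

structure CurvatureForm (n : ℕ) where
  R : EuclideanSpace ℂ (Fin n) → EuclideanSpace ℂ (Fin n) → EuclideanSpace ℂ (Fin n) →
      EuclideanSpace ℂ (Fin n) → ℂ
  add_fst : ∀ X X' Y Z W, R (X + X') Y Z W = R X Y Z W + R X' Y Z W
  smul_fst : ∀ (c : ℂ) (X Y Z W), R (c • X) Y Z W = c * R X Y Z W
  add_snd : ∀ X Y Y' Z W, R X (Y + Y') Z W = R X Y Z W + R X Y' Z W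
  smul_snd : ∀ (c : ℂ) (X Y Z W), R X (c • Y) Z W = conj c * R X Y Z W
  add_trd : ∀ X Y Z Z' W, R X Y (Z + Z') W = R X Y Z W + R X Y Z' W
  smul_trd : ∀ (c : ℂ) (X Y Z W), R X Y (c • Z) W = c * R X Y Z W
  add_fth : ∀ X Y Z W W', R X Y Z (W + W') = R X Y Z W + R X Y Z W'
  smul_fth : ∀ (c : ℂ) (X Y Z W), R X Y Z (c • W) = conj c * R X Y Z W

open Finset Complex

lemma sum_I_pow_mul_conj_pow {p q : ℕ} (hp : p ≤ 2) (hq : q ≤ 2) :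
    ∑ t : Fin 4, (I ^ (t : ℕ)) ^ p * conj (I ^ (t : ℕ)) ^ q = if p = q then 4 else 0 := by
  -- the summand is `(I ^ (p - q)) ^ t`, and `|p - q| ≤ 2 < 4`
  interval_cases p <;> interval_cases q <;>
    simp [Fin.sum_univ_four, pow_succ, Complex.ext_iff] <;> norm_num

lemma mul_eq_prod_pow_count {ι M : Type*} [Fintype ι] [DecidableEq ι] [CommMonoid M]
    (g : ι → M) (i k : ι) :
    g i * g k = ∏ x, g x ^ Multiset.count x {i, k} := by
  simp only [Multiset.insert_eq_cons, Multiset.count_cons, Multiset.count_singleton, pow_add,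
    pow_ite, pow_one, pow_zero, prod_mul_distrib, prod_ite_eq', mem_univ, if_true, mul_comm]

lemma Multiset.pair_eq_pair_iff {α : Type*} {i k j l : α} :
    ({i, k} : Multiset α) = {j, l} ↔ i = j ∧ k = l ∨ i = l ∧ k = j := by
  simp only [insert_eq_cons, cons_eq_cons, singleton_inj, singleton_eq_cons_iff,
    exists_eq_right_right, and_true]
  grind

lemma Multiset.count_pair_le_two {α : Type*} [DecidableEq α] (x i k : α) :
    Multiset.count x {i, k} ≤ 2 :=
  Multiset.count_le_card x _

section

variable {ι : Type*} [Fintype ι] [DecidableEq ι]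

lemma sum_phase_product (i j k l : ι) :
    ∑ f : ι → Fin 4,
        I ^ (f i : ℕ) * conj (I ^ (f j : ℕ)) * I ^ (f k : ℕ) * conj (I ^ (f l : ℕ)) =
      if (i = j ∧ k = l) ∨ (i = l ∧ k = j) then 4 ^ Fintype.card ι else 0 := by
  have hprod (f : ι → Fin 4) :
      I ^ (f i : ℕ) * conj (I ^ (f j : ℕ)) * I ^ (f k : ℕ) * conj (I ^ (f l : ℕ)) =
        ∏ x, (I ^ (f x : ℕ)) ^ Multiset.count x {i, k} *
          conj (I ^ (f x : ℕ)) ^ Multiset.count x {j, l} := by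
    rw [prod_mul_distrib, ← mul_eq_prod_pow_count (fun x => I ^ (f x : ℕ)),
      ← mul_eq_prod_pow_count (fun x => conj (I ^ (f x : ℕ)))]
    ring
  simp_rw [hprod]
  rw [← Fintype.prod_sum fun x (t : Fin 4) =>
    (I ^ (t : ℕ)) ^ Multiset.count x {i, k} * conj (I ^ (t : ℕ)) ^ Multiset.count x {j, l}]
  simp_rw [sum_I_pow_mul_conj_pow (Multiset.count_pair_le_two _ _ _)
    (Multiset.count_pair_le_two _ _ _)]
  rw [Fintype.prod_ite_zero, prod_const, card_univ]
  simp only [← Multiset.ext, Multiset.pair_eq_pair_iff]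

lemma sum_ite_pairing {M : Type*} [AddCommGroup M] (F : ι → ι → ι → ι → M) :
    ∑ i, ∑ j, ∑ k, ∑ l, (if (i = j ∧ k = l) ∨ (i = l ∧ k = j) then F i j k l else 0) =
      ∑ i, ∑ k, (F i i k k + F i k k i) - ∑ i, F i i i i := by
  have hsplit (i j k l : ι) : (if (i = j ∧ k = l) ∨ (i = l ∧ k = j) then F i j k l else 0) =
      (if j = i then if l = k then F i j k l else 0 else 0) +
      (if l = i then if j = k then F i j k l else 0 else 0) -
      (if j = i then if k = i then if l = i then F i j k l else 0 else 0 else 0) := by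
    split_ifs <;> grind
  simp only [hsplit, sum_add_distrib, sum_sub_distrib, sum_ite_irrel, sum_const_zero,
    sum_ite_eq', sum_ite_eq, mem_univ, if_true]

end

def phaseVec {ι E : Type*} [Fintype ι] [AddCommMonoid E] [Module ℂ E] (u : ι → E) (a : ι → ℝ)
    (f : ι → Fin 4) : E :=
  ∑ i, ((a i : ℂ) * I ^ (f i : ℕ)) • u i

section

variable {ι E : Type*} [Fintype ι] [NormedAddCommGroup E] [InnerProductSpace ℂ E]

lemma phaseVec_ne_zero (e : OrthonormalBasis ι ℂ E) {a : ι → ℝ} {i₀ : ι} (hi₀ : a i₀ ≠ 0)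
    (f : ι → Fin 4) : phaseVec e a f ≠ 0 := fun h =>
  mul_ne_zero (ofReal_ne_zero.mpr hi₀) (pow_ne_zero _ I_ne_zero) <|
    Fintype.linearIndependent_iff.mp e.orthonormal.linearIndependent _ h i₀

lemma OrthonormalBasis.exists_apply_eq {𝕜 F : Type*} [RCLike 𝕜] [NormedAddCommGroup F]
    [InnerProductSpace 𝕜 F] [FiniteDimensional 𝕜 F]
    (h : Module.finrank 𝕜 F = Fintype.card ι) (i₀ : ι) {u : F} (hu : ‖u‖ = 1) :
    ∃ e : OrthonormalBasis ι 𝕜 F, e i₀ = u := by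
  have hortho : Orthonormal 𝕜 (({i₀} : Set ι).domRestrict fun _ => u) :=
    ⟨fun _ => hu, fun i j hij => absurd (Subsingleton.elim i j) hij⟩
  obtain ⟨e, he⟩ := hortho.exists_orthonormalBasis_extension_of_card_eq h
  exact ⟨e, he i₀ rfl⟩

end

namespace CurvatureForm

variable {n : ℕ} (R : CurvatureForm n) {ι : Type*}

lemma sum_smul_fst (s : Finset ι) (c : ι → ℂ) (u : ι → EuclideanSpace ℂ (Fin n)) (Y Z W) :
    R.R (∑ i ∈ s, c i • u i) Y Z W = ∑ i ∈ s, c i * R.R (u i) Y Z W := by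
  simpa only [AddMonoidHom.mk'_apply, R.smul_fst] using
    map_sum (AddMonoidHom.mk' (R.R · Y Z W) fun X X' => R.add_fst X X' Y Z W)
      (fun i => c i • u i) s

lemma sum_smul_snd (s : Finset ι) (c : ι → ℂ) (u : ι → EuclideanSpace ℂ (Fin n)) (X Z W) :
    R.R X (∑ i ∈ s, c i • u i) Z W = ∑ i ∈ s, conj (c i) * R.R X (u i) Z W := by
  simpa only [AddMonoidHom.mk'_apply, R.smul_snd] using
    map_sum (AddMonoidHom.mk' (R.R X · Z W) fun Y Y' => R.add_snd X Y Y' Z W)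
      (fun i => c i • u i) s

lemma sum_smul_trd (s : Finset ι) (c : ι → ℂ) (u : ι → EuclideanSpace ℂ (Fin n)) (X Y W) :
    R.R X Y (∑ i ∈ s, c i • u i) W = ∑ i ∈ s, c i * R.R X Y (u i) W := by
  simpa only [AddMonoidHom.mk'_apply, R.smul_trd] using
    map_sum (AddMonoidHom.mk' (R.R X Y · W) fun Z Z' => R.add_trd X Y Z Z' W)
      (fun i => c i • u i) s

lemma sum_smul_fth (s : Finset ι) (c : ι → ℂ) (u : ι → EuclideanSpace ℂ (Fin n)) (X Y Z) :
    R.R X Y Z (∑ i ∈ s, c i • u i) = ∑ i ∈ s, conj (c i) * R.R X Y Z (u i) := by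
  simpa only [AddMonoidHom.mk'_apply, R.smul_fth] using
    map_sum (AddMonoidHom.mk' (R.R X Y Z ·) fun W W' => R.add_fth X Y Z W W')
      (fun i => c i • u i) s

lemma apply_sum_smul [Fintype ι] (c : ι → ℂ) (u : ι → EuclideanSpace ℂ (Fin n)) :
    R.R (∑ i, c i • u i) (∑ i, c i • u i) (∑ i, c i • u i) (∑ i, c i • u i) =
      ∑ i, ∑ j, ∑ k, ∑ l,
        c i * conj (c j) * c k * conj (c l) * R.R (u i) (u j) (u k) (u l) := by
  simp_rw [sum_smul_fst, sum_smul_snd, sum_smul_trd, sum_smul_fth, mul_sum, mul_assoc]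

lemma apply_smul_self (c : ℂ) (v : EuclideanSpace ℂ (Fin n)) :
    R.R (c • v) (c • v) (c • v) (c • v) = ((‖c‖ ^ 4 : ℝ) : ℂ) * R.R v v v v := by
  rw [R.smul_fst, R.smul_snd, R.smul_trd, R.smul_fth]
  have := mul_conj' c
  push_cast
  linear_combination (c * conj c + ‖c‖^2) * R.R v v v v * this

theorem sum_apply_phaseVec [Fintype ι] [DecidableEq ι] (u : ι → EuclideanSpace ℂ (Fin n))
    (a : ι → ℝ) :
    ∑ f : ι → Fin 4,
        R.R (phaseVec u a f) (phaseVec u a f) (phaseVec u a f) (phaseVec u a f) =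
      ((4 ^ Fintype.card ι : ℝ) : ℂ) *
        (∑ i, ∑ k, ((a i ^ 2 * a k ^ 2 : ℝ) : ℂ) *
            (R.R (u i) (u i) (u k) (u k) + R.R (u i) (u k) (u k) (u i)) -
          ∑ i, ((a i ^ 4 : ℝ) : ℂ) * R.R (u i) (u i) (u i) (u i)) := by
  have hcoef (f : ι → Fin 4) (i j k l : ι) :
      (a i * I ^ (f i : ℕ)) * conj (a j * I ^ (f j : ℕ)) * (a k * I ^ (f k : ℕ)) *
          conj (a l * I ^ (f l : ℕ)) * R.R (u i) (u j) (u k) (u l) =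
        (I ^ (f i : ℕ) * conj (I ^ (f j : ℕ)) * I ^ (f k : ℕ) * conj (I ^ (f l : ℕ))) *
          ((a i * a j * a k * a l : ℝ) * R.R (u i) (u j) (u k) (u l)) := by
    simp only [map_mul, conj_ofReal]
    push_cast
    ring
  simp only [phaseVec, R.apply_sum_smul, hcoef]
  simp_rw [Finset.sum_comm (s := (univ : Finset (ι → Fin 4))), ← sum_mul, sum_phase_product, ite_mul,
    zero_mul]
  rw [sum_ite_pairing, mul_sub, mul_sum, mul_sum]
  push_cast
  congr 1
  · refine sum_congr rfl fun i _ => ?_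
    rw [mul_sum]
    refine sum_congr rfl fun k _ => ?_
    ring
  · refine sum_congr rfl fun i _ => ?_
    ring

theorem frame_sum_pos_of_pos (hR : ∀ v, v ≠ 0 → 0 < (R.R v v v v).re)
    (e : OrthonormalBasis (Fin n) ℂ (EuclideanSpace ℂ (Fin n))) {b : Fin n → ℝ}
    (hb : ∀ i, 0 ≤ b i) (hb₀ : b ≠ 0) :
    0 < ∑ i, ∑ k,
      (R.R (e i) (e i) (e k) (e k) + R.R (e i) (e k) (e k) (e i)).re * b i * b k := by
  obtain ⟨i₀, hi₀⟩ := Function.ne_iff.mp hb₀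
  set a : Fin n → ℝ := fun i => √(b i)
  have ha₀ : a i₀ ≠ 0 := by simpa [a, Real.sqrt_eq_zero (hb i₀)] using hi₀
  have hsum : 0 < (∑ f, R.R (phaseVec e a f) (phaseVec e a f) (phaseVec e a f)
      (phaseVec e a f)).re := by
    rw [re_sum]
    exact sum_pos (fun f _ => hR _ (phaseVec_ne_zero e ha₀ f)) univ_nonempty
  have hdiag : 0 ≤ ∑ i, b i ^ 2 * (R.R (e i) (e i) (e i) (e i)).re :=
    sum_nonneg fun i _ => mul_nonneg (sq_nonneg _) (hR _ (e.orthonormal.ne_zero i)).le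
  have ha2 (i : Fin n) : a i ^ 2 = b i := Real.sq_sqrt (hb i)
  have ha4 (i : Fin n) : a i ^ 4 = b i ^ 2 := by rw [← ha2]; ring
  simp only [R.sum_apply_phaseVec, re_ofReal_mul, sub_re, re_sum, ha2, ha4] at hsum
  have hQ : ∑ i, ∑ k, b i * b k *
        (R.R (e i) (e i) (e k) (e k) + R.R (e i) (e k) (e k) (e i)).re =
      ∑ i, ∑ k, (R.R (e i) (e i) (e k) (e k) + R.R (e i) (e k) (e k) (e i)).re * b i * b k :=
    sum_congr rfl fun i _ => sum_congr rfl fun k _ => by ring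
  linarith [pos_of_mul_pos_right hsum (by positivity)]

theorem pos_of_frame_sum_pos
    (hQ : ∀ (e : OrthonormalBasis (Fin n) ℂ (EuclideanSpace ℂ (Fin n))) (b : Fin n → ℝ),
      (∀ i, 0 ≤ b i) → b ≠ 0 →
        0 < ∑ i, ∑ k,
          (R.R (e i) (e i) (e k) (e k) + R.R (e i) (e k) (e k) (e i)).re * b i * b k)
    {v : EuclideanSpace ℂ (Fin n)} (hv : v ≠ 0) : 0 < (R.R v v v v).re := by
  obtain ⟨i₀, -⟩ : ∃ i, v i ≠ 0 := by
    by_contra! h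
    exact hv (by ext i; simp [h i])
  set u : EuclideanSpace ℂ (Fin n) := (‖v‖⁻¹ : ℂ) • v
  obtain ⟨e, he⟩ :=
    OrthonormalBasis.exists_apply_eq (𝕜 := ℂ) (by simp) i₀ (norm_smul_inv_norm (𝕜 := ℂ) hv)
  have hu : 0 < (R.R u u u u).re := by
    have := hQ e (Pi.single i₀ 1)
      (Pi.single_nonneg.mpr zero_le_one : 0 ≤ (Pi.single i₀ 1 : Fin n → ℝ)) (by simp)
    simpa [Pi.single_apply, he] using this
  have hvu : v = (‖v‖ : ℂ) • u := by
    simp [u, smul_smul, mul_inv_cancel₀ (ofReal_ne_zero.mpr (norm_ne_zero_iff.mpr hv))]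
  rw [hvu, R.apply_smul_self, re_ofReal_mul]
  exact mul_pos (pow_pos (by simpa using hv) 4) hu

end CurvatureForm

theorem stmt7_general (n : ℕ) (R : CurvatureForm n) :
    (∀ v : EuclideanSpace ℂ (Fin n), v ≠ 0 → 0 < (R.R v v v v).re) ↔
      (∀ (e : OrthonormalBasis (Fin n) ℂ (EuclideanSpace ℂ (Fin n))) (b : Fin n → ℝ),
        (∀ i, 0 ≤ b i) → b ≠ 0 →
          0 < ∑ i, ∑ k,
            (R.R (e i) (e i) (e k) (e k) + R.R (e i) (e k) (e k) (e i)).re *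
              b i * b k) :=
  ⟨fun hR e _ hb hb₀ => R.frame_sum_pos_of_pos hR e hb hb₀,
    fun hQ _ hv => R.pos_of_frame_sum_pos hQ hv⟩

/-- Characterization of `HSC > 0` (paper, §2): under the Hermitian symmetry
`conj (R X Y Z W) = R Y X W Z`, positivity of `R(v,v,v,v)` on nonzero vectors is
equivalent to positivity of the quadratic form
`Σ Re(R(eᵢ,eᵢ,e_k,e_k) + R(eᵢ,e_k,e_k,eᵢ)) bᵢ b_k` on nonzero nonnegative vectors,
in every unitary frame. -/
theorem stmt7 (n : ℕ) (hn : 1 ≤ n) (R : CurvatureForm n)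
    (hsym : ∀ X Y Z W, conj (R.R X Y Z W) = R.R Y X W Z) :
    (∀ v : EuclideanSpace ℂ (Fin n), v ≠ 0 → 0 < (R.R v v v v).re) ↔
      (∀ (e : OrthonormalBasis (Fin n) ℂ (EuclideanSpace ℂ (Fin n))) (b : Fin n → ℝ),
        (∀ i, 0 ≤ b i) → b ≠ 0 →
          0 < ∑ i, ∑ k,
            (R.R (e i) (e i) (e k) (e k) + R.R (e i) (e k) (e k) (e i)).re *
              b i * b k) :=
  stmt7_general n R
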